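/- arXiv:1905.06171 — 8 statements merged into one kernel-verified Lean document; each statement's English description precedes it below -/
import Mathlib

section
/- For every natural number n and every real r > 0, the generalized geometric polynomial admits the integral representation ω_{n,r}(x) = (1/Γ(r)) ∫_0^∞ λ^{r-1} φ_n(xλ) e^{-λ} dλ for all real x. -/
open Finset MeasureTheory Real

/-- Stirling numbers of the second kind. -/
def stirling2 : ℕ → ℕ → ℕ
  | 0, 0 => 1
  | 0, _ + 1 => 0
  | _ + 1, 0 => 0
  | n + 1, k + 1 => (k + 1) * stirling2 n (k + 1) + stirling2 n k

/-- The generalized geometric polynomials `ω_{n,r}(x) = Σ_{k=0}^n S(n,k) (r)_k x^k`,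
where `(r)_k` is the rising factorial (Pochhammer symbol). -/
noncomputable def geomPoly (n : ℕ) (r x : ℝ) : ℝ :=
  ∑ k ∈ Finset.range (n + 1), (stirling2 n k : ℝ) * (ascPochhammer ℝ k).eval r * x ^ k

/-- The exponential polynomials `φ_n(x) = Σ_{k=0}^n S(n,k) x^k`. -/
noncomputable def expPoly (n : ℕ) (x : ℝ) : ℝ :=
  ∑ k ∈ Finset.range (n + 1), (stirling2 n k : ℝ) * x ^ k

/-! Expanding `φ_n(xλ)` into monomials, the integral splits into Gamma moments
`∫_0^∞ λ^(r+k-1) e^{-λ} dλ = Γ(r + k) = Γ(r) (r)_k`, which turns `S(n,k) x^k` into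
`S(n,k) (r)_k x^k` after division by `Γ(r)`. -/

namespace Real

theorem Gamma_add_nat_eq_mul_ascPochhammer {r : ℝ} (hr : ∀ m : ℕ, r ≠ -m) (k : ℕ) :
    Gamma (r + k) = Gamma r * (ascPochhammer ℝ k).eval r := by
  induction k with
  | zero => simp
  | succ k ih =>
    have hrk : r + k ≠ 0 := fun h => hr k (by linarith)
    rw [Nat.cast_succ, ← add_assoc, Gamma_add_one hrk, ih, ascPochhammer_succ_right,
      Polynomial.eval_mul, Polynomial.eval_add, Polynomial.eval_X, Polynomial.eval_natCast]
    ring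

theorem rpow_sub_one_mul_pow_mul_exp_neg {r l : ℝ} (hl : 0 < l) (k : ℕ) :
    l ^ (r - 1) * l ^ k * exp (-l) = exp (-l) * l ^ (r + k - 1) := by
  rw [show r + k - 1 = (r - 1) + k by ring, rpow_add hl, rpow_natCast]
  ring

theorem integrableOn_rpow_sub_one_mul_pow_mul_exp_neg {r : ℝ} (hr : 0 < r) (k : ℕ) :
    IntegrableOn (fun l : ℝ => l ^ (r - 1) * l ^ k * exp (-l)) (Set.Ioi 0) :=
  (GammaIntegral_convergent (by positivity : 0 < r + k)).congr_fun
    (fun _ hl => (rpow_sub_one_mul_pow_mul_exp_neg hl k).symm) measurableSet_Ioi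

theorem integral_rpow_sub_one_mul_pow_mul_exp_neg {r : ℝ} (hr : 0 < r) (k : ℕ) :
    ∫ l in Set.Ioi 0, l ^ (r - 1) * l ^ k * exp (-l) = Gamma r * (ascPochhammer ℝ k).eval r := by
  have hr' : ∀ m : ℕ, r ≠ -m := fun m h => by linarith [m.cast_nonneg (α := ℝ)]
  rw [← Gamma_add_nat_eq_mul_ascPochhammer hr', Gamma_eq_integral (by positivity)]
  exact setIntegral_congr_fun measurableSet_Ioi fun _ hl => rpow_sub_one_mul_pow_mul_exp_neg hl k

end Real

theorem rpow_sub_one_mul_expPoly_mul_exp_neg (n : ℕ) (r x l : ℝ) :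
    l ^ (r - 1) * expPoly n (x * l) * exp (-l) =
      ∑ k ∈ range (n + 1), (stirling2 n k * x ^ k) * (l ^ (r - 1) * l ^ k * exp (-l)) := by
  simp only [expPoly, mul_sum, sum_mul]
  exact sum_congr rfl fun k _ => by ring

/-- For every natural `n` and real `r > 0`,
`ω_{n,r}(x) = (1/Γ(r)) ∫_0^∞ λ^{r-1} φ_n(xλ) e^{-λ} dλ` for all real `x`. -/
theorem geomPoly_integral_repr (n : ℕ) (r : ℝ) (hr : 0 < r) (x : ℝ) :
    geomPoly n r x =
      (1 / Real.Gamma r) *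
        ∫ l in Set.Ioi (0 : ℝ), l ^ (r - 1) * expPoly n (x * l) * Real.exp (-l) := by
  have hΓ : Gamma r ≠ 0 := (Gamma_pos_of_pos hr).ne'
  simp_rw [rpow_sub_one_mul_expPoly_mul_exp_neg]
  rw [integral_finsetSum _ fun k _ =>
      (integrableOn_rpow_sub_one_mul_pow_mul_exp_neg hr k).const_mul _, mul_sum, geomPoly]
  refine sum_congr rfl fun k _ => ?_
  rw [integral_const_mul, integral_rpow_sub_one_mul_pow_mul_exp_neg hr k]
  field_simp
end

section
/- For every integer n ≥ 1, every real x, and every real t with |t| < 1, the ordinary generating function with respect to the parameter r satisfies Σ_{r=0}^∞ ω_{n,r}(x) t^r = (t/(1-t)) · ω_n(x/(1-t)), where on the left r runs over nonnegative integers. -/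
open Finset MeasureTheory Real

lemma stirling2_zero (n : ℕ) (hn : 1 ≤ n) : stirling2 n 0 = 0 := by
  obtain ⟨m, rfl⟩ := Nat.exists_eq_add_of_le hn
  rw [Nat.add_comm]
  rfl

lemma ascFactorial_succ_eq (m k : ℕ) :
    (m + 1).ascFactorial k = (m + k).choose k * k.factorial := by
  have h1 : m.factorial * (m + 1).ascFactorial k = (m + k).factorial :=
    Nat.factorial_mul_ascFactorial m k
  have h2 : (m + k).choose k * k.factorial * m.factorial = (m + k).factorial := by
    have := Nat.choose_mul_factorial_mul_factorial (Nat.le_add_left k m)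
    simpa [Nat.add_sub_cancel] using this
  have := h2.trans h1.symm
  exact Nat.eq_of_mul_eq_mul_right m.factorial_pos (by linarith)

/-- Key single-`k` sum: `Σ_r (r)_k t^r = t·k!/(1-t)^(k+1)` for `k ≥ 1`. -/
lemma key_hasSum (k : ℕ) (hk : 1 ≤ k) {t : ℝ} (ht : |t| < 1) :
    HasSum (fun r : ℕ => (ascPochhammer ℝ k).eval (r : ℝ) * t ^ r)
      (t * k.factorial / (1 - t) ^ (k + 1)) := by
  have ht' : ‖t‖ < 1 := by rwa [Real.norm_eq_abs]
  have hk0 : k ≠ 0 := by omega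
  have H := (hasSum_choose_mul_geometric_of_norm_lt_one k ht').mul_left ((k.factorial : ℝ) * t)
  have heq : ∀ m : ℕ, (ascPochhammer ℝ k).eval ((m + 1 : ℕ) : ℝ) * t ^ (m + 1)
      = (k.factorial : ℝ) * t * ((m + k).choose k * t ^ m) := by
    intro m
    have h1 : (ascPochhammer ℝ k).eval ((m + 1 : ℕ) : ℝ)
        = (((ascPochhammer ℕ k).eval (m + 1) : ℕ) : ℝ) := (ascPochhammer_eval_cast ℝ k (m+1)).symm
    rw [h1, ascPochhammer_nat_eq_ascFactorial, ascFactorial_succ_eq]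
    push_cast
    ring
  have H2 : HasSum (fun m : ℕ => (ascPochhammer ℝ k).eval (((m + 1 : ℕ)) : ℝ) * t ^ (m + 1))
      ((k.factorial : ℝ) * t * (1 / (1 - t) ^ (k + 1))) := H.congr_fun heq
  have H3 := (hasSum_nat_add_iff (f := fun r : ℕ => (ascPochhammer ℝ k).eval (r : ℝ) * t ^ r) 1).mp
    (by simpa using H2)
  simp only [Finset.range_one, Finset.sum_singleton, Nat.cast_zero,
    ascPochhammer_ne_zero_eval_zero ℝ hk0, zero_mul, add_zero] at H3
  rw [show t * (k.factorial : ℝ) / (1 - t) ^ (k + 1)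
      = (k.factorial : ℝ) * t * ((1 - t) ^ (k + 1))⁻¹ by ring]
  exact H3

/-- For `n ≥ 1`, real `x`, and `|t| < 1`,
`Σ_{r=0}^∞ ω_{n,r}(x) t^r = (t/(1-t)) ω_n(x/(1-t))`. -/
theorem geomPoly_ogf_in_r (n : ℕ) (hn : 1 ≤ n) (x t : ℝ) (ht : |t| < 1) :
    HasSum (fun r : ℕ => geomPoly n (r : ℝ) x * t ^ r)
      (t / (1 - t) * geomPoly n 1 (x / (1 - t))) := by
  have h1t : (1 : ℝ) - t ≠ 0 := by
    intro h
    have : t = 1 := by linarith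
    rw [this] at ht; norm_num at ht
  -- per-k sums
  have hk : ∀ k ∈ Finset.range (n + 1),
      HasSum (fun r : ℕ => (stirling2 n k : ℝ) * (ascPochhammer ℝ k).eval (r : ℝ) * x ^ k * t ^ r)
        ((stirling2 n k : ℝ) * (t * k.factorial / (1 - t) ^ (k + 1)) * x ^ k) := by
    intro k _
    rcases Nat.eq_zero_or_pos k with rfl | hkpos
    · have hz : (stirling2 n 0 : ℝ) = 0 := by rw [stirling2_zero n hn]; norm_num
      simp only [hz, zero_mul]
      exact hasSum_zero
    · have := (key_hasSum k hkpos ht).mul_left (stirling2 n k : ℝ)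
      have := this.mul_right (x ^ k)
      refine this.congr_fun fun r => ?_
      ring
  have Htot := hasSum_sum hk
  have Hfun : (fun r : ℕ => ∑ k ∈ Finset.range (n + 1),
      (stirling2 n k : ℝ) * (ascPochhammer ℝ k).eval (r : ℝ) * x ^ k * t ^ r)
      = fun r : ℕ => geomPoly n (r : ℝ) x * t ^ r := by
    funext r
    rw [geomPoly, Finset.sum_mul]
  rw [Hfun] at Htot
  convert Htot using 1
  rw [geomPoly, Finset.mul_sum]
  refine Finset.sum_congr rfl fun k _ => ?_
  rw [ascPochhammer_eval_one]
  rw [div_pow, pow_succ]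
  field_simp
end

section
/- For every integer n ≥ 1, every real x, and every real σ > n + 1, the Dirichlet generating function satisfies Σ_{r=1}^∞ ω_{n,r}(x)/r^σ = Σ_{k=0}^n [ Σ_{j=1}^k (-1)^{j+k} S(n,k) s(k,j) ζ(σ - j) ] x^k, where r runs over positive integers and ζ is the Riemann zeta function. -/
open Finset MeasureTheory Real

/-- Signed Stirling numbers of the first kind, defined by
`x(x-1)⋯(x-n+1) = Σ_{k=0}^n s(n,k) x^k`. -/
def stirling1 : ℕ → ℕ → ℤ
  | 0, 0 => 1
  | 0, _ + 1 => 0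
  | n + 1, 0 => -(n : ℤ) * stirling1 n 0
  | n + 1, k + 1 => stirling1 n k - (n : ℤ) * stirling1 n (k + 1)

/-- The Riemann zeta function `ζ(s) = Σ_{m=1}^∞ m^{-s}` (for real `s > 1`). -/
noncomputable def realZeta (s : ℝ) : ℝ := ∑' m : ℕ, 1 / ((m : ℝ) + 1) ^ s

lemma stirling1_eq_zero_of_lt : ∀ n k, n < k → stirling1 n k = 0
  | 0, _ + 1, _ => rfl
  | n + 1, k + 1, h => by
      rw [stirling1, stirling1_eq_zero_of_lt n k (by omega),
        stirling1_eq_zero_of_lt n (k+1) (by omega)]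
      ring

lemma stirling1_succ_zero : ∀ n, stirling1 (n + 1) 0 = 0
  | 0 => by simp [stirling1]
  | n + 1 => by rw [stirling1, stirling1_succ_zero n]; ring

lemma poch_eval (k : ℕ) (r : ℝ) :
    (ascPochhammer ℝ k).eval r
      = ∑ j ∈ range (k + 1), (-1 : ℝ) ^ (j + k) * (stirling1 k j : ℝ) * r ^ j := by
  induction k with
  | zero => simp [stirling1]
  | succ k ih =>
      rw [ascPochhammer_succ_right, Polynomial.eval_mul, ih]
      simp only [Polynomial.eval_add, Polynomial.eval_X, Polynomial.eval_natCast]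
      rw [Finset.sum_range_succ' (fun j => (-1:ℝ)^(j+(k+1)) * (stirling1 (k+1) j : ℝ) * r^j)]
      have h0 : ((-1:ℝ)^(0+(k+1)) * (stirling1 (k+1) 0 : ℝ) * r^0)
          = (k:ℝ) * ((-1:ℝ)^(0+k) * (stirling1 k 0 : ℝ) * r^0) := by
        rw [show stirling1 (k+1) 0 = -(k:ℤ) * stirling1 k 0 from rfl]
        push_cast; ring
      rw [h0]
      have hstep : ∀ j ∈ range (k+1),
          (-1:ℝ)^((j+1)+(k+1)) * (stirling1 (k+1) (j+1) : ℝ) * r^(j+1)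
            = ((-1:ℝ)^(j+k) * (stirling1 k j : ℝ) * r^j) * r
              + (k:ℝ) * ((-1:ℝ)^((j+1)+k) * (stirling1 k (j+1) : ℝ) * r^(j+1)) := by
        intro j _
        rw [show stirling1 (k+1) (j+1) = stirling1 k j - (k:ℤ) * stirling1 k (j+1) from rfl]
        push_cast
        have : (-1:ℝ)^((j+1)+(k+1)) = (-1:ℝ)^(j+k) := by
          rw [show (j+1)+(k+1) = (j+k)+2 by ring, pow_add]; simp
        rw [this]
        have : (-1:ℝ)^((j+1)+k) = -(-1:ℝ)^(j+k) := by
          rw [show (j+1)+k = (j+k)+1 by ring, pow_succ]; ring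
        rw [this]; ring
      rw [Finset.sum_congr rfl hstep, Finset.sum_add_distrib]
      have hlast : ((-1:ℝ)^((k+1)+k) * (stirling1 k (k+1) : ℝ) * r^(k+1)) = 0 := by
        rw [stirling1_eq_zero_of_lt k (k+1) (by omega)]; simp
      rw [← Finset.sum_mul, ← Finset.mul_sum]
      rw [show (∑ j ∈ range (k+1), (-1:ℝ)^((j+1)+k) * (stirling1 k (j+1) : ℝ) * r^(j+1))
            = (∑ j ∈ range (k+2), (-1:ℝ)^(j+k) * (stirling1 k j : ℝ) * r^j)
              - (-1:ℝ)^(0+k) * (stirling1 k 0 : ℝ) * r^0 by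
        rw [Finset.sum_range_succ' (fun j => (-1:ℝ)^(j+k) * (stirling1 k j : ℝ) * r^j) (k+1)]
        ring]
      rw [Finset.sum_range_succ (fun j => (-1:ℝ)^(j+k) * (stirling1 k j : ℝ) * r^j) (k+1),
        hlast]
      ring

lemma hasSum_realZeta (s : ℝ) (hs : 1 < s) :
    HasSum (fun m : ℕ => 1 / ((m : ℝ) + 1) ^ s) (realZeta s) := by
  have hsum : Summable (fun m : ℕ => 1 / ((m : ℝ) + 1) ^ s) := by
    have := (Real.summable_one_div_nat_rpow (p := s)).2 hs
    have h2 := (summable_nat_add_iff (f := fun n : ℕ => 1 / (n : ℝ) ^ s) 1).2 this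
    simpa [Nat.cast_add] using h2
  exact hsum.hasSum

/-- For `n ≥ 1`, real `x`, and real `σ > n + 1`,
`Σ_{r=1}^∞ ω_{n,r}(x)/r^σ = Σ_{k=0}^n [Σ_{j=1}^k (-1)^{j+k} S(n,k) s(k,j) ζ(σ-j)] x^k`. -/
theorem geomPoly_dirichlet_gf (n : ℕ) (hn : 1 ≤ n) (x σ : ℝ) (hσ : (n : ℝ) + 1 < σ) :
    HasSum (fun r : ℕ => geomPoly n ((r : ℝ) + 1) x / ((r : ℝ) + 1) ^ σ)
      (∑ k ∈ Finset.range (n + 1),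
        (∑ j ∈ Finset.Icc 1 k, (-1 : ℝ) ^ (j + k) * (stirling2 n k : ℝ) * (stirling1 k j : ℝ) *
          realZeta (σ - (j : ℝ))) * x ^ k) := by
  -- per (k,j) basic sum
  have hpos : ∀ r : ℕ, (0:ℝ) < (r:ℝ) + 1 := fun r => by positivity
  have hbase : ∀ j : ℕ, j ≤ n →
      HasSum (fun r : ℕ => ((r:ℝ)+1) ^ j / ((r:ℝ)+1) ^ σ) (realZeta (σ - (j:ℝ))) := by
    intro j hj
    have h1 : 1 < σ - (j:ℝ) := by
      have : (j:ℝ) ≤ (n:ℝ) := by exact_mod_cast hj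
      linarith
    have := hasSum_realZeta (σ - (j:ℝ)) h1
    refine this.congr_fun fun r => ?_
    rw [Real.rpow_sub (hpos r), Real.rpow_natCast]
    field_simp
  have key : ∀ k ∈ range (n + 1),
      HasSum (fun r : ℕ =>
          (stirling2 n k : ℝ) * (ascPochhammer ℝ k).eval ((r:ℝ)+1) * x ^ k / ((r:ℝ)+1) ^ σ)
        ((∑ j ∈ Finset.Icc 1 k, (-1 : ℝ) ^ (j + k) * (stirling2 n k : ℝ) * (stirling1 k j : ℝ) *
          realZeta (σ - (j : ℝ))) * x ^ k) := by
    intro k hk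
    rw [Finset.mem_range] at hk
    -- inner: HasSum over r of sum over j
    have hinner : HasSum (fun r : ℕ =>
        ∑ j ∈ range (k+1),
          ((-1:ℝ)^(j+k) * (stirling2 n k : ℝ) * (stirling1 k j : ℝ) * x ^ k)
            * (((r:ℝ)+1) ^ j / ((r:ℝ)+1) ^ σ))
        (∑ j ∈ range (k+1),
          ((-1:ℝ)^(j+k) * (stirling2 n k : ℝ) * (stirling1 k j : ℝ) * x ^ k)
            * realZeta (σ - (j:ℝ))) := by
      refine hasSum_sum fun j hj => ?_
      rw [Finset.mem_range] at hj
      exact (hbase j (by omega)).mul_left _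
    have hfun : (fun r : ℕ =>
        ∑ j ∈ range (k+1),
          ((-1:ℝ)^(j+k) * (stirling2 n k : ℝ) * (stirling1 k j : ℝ) * x ^ k)
            * (((r:ℝ)+1) ^ j / ((r:ℝ)+1) ^ σ))
        = (fun r : ℕ =>
          (stirling2 n k : ℝ) * (ascPochhammer ℝ k).eval ((r:ℝ)+1) * x ^ k / ((r:ℝ)+1) ^ σ) := by
      funext r
      rw [poch_eval, Finset.mul_sum, Finset.sum_mul, Finset.sum_div]
      refine Finset.sum_congr rfl fun j _ => ?_
      ring
    rw [hfun] at hinner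
    -- fix target: range (k+1) sum equals Icc 1 k sum since j = 0 term vanishes
    have htgt : (∑ j ∈ range (k+1),
          ((-1:ℝ)^(j+k) * (stirling2 n k : ℝ) * (stirling1 k j : ℝ) * x ^ k)
            * realZeta (σ - (j:ℝ)))
        = (∑ j ∈ Finset.Icc 1 k, (-1 : ℝ) ^ (j + k) * (stirling2 n k : ℝ) * (stirling1 k j : ℝ) *
          realZeta (σ - (j : ℝ))) * x ^ k := by
      have hset : range (k+1) = insert 0 (Finset.Icc 1 k) := by
        ext m; simp [Finset.mem_Icc, Finset.mem_range]; omega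
      rw [hset, Finset.sum_insert (by simp)]
      have hzero : ((-1:ℝ)^(0+k) * (stirling2 n k : ℝ) * (stirling1 k 0 : ℝ) * x ^ k)
          * realZeta (σ - (0:ℕ)) = 0 := by
        rcases Nat.eq_zero_or_pos k with hk0 | hk0
        · subst hk0
          obtain ⟨m, rfl⟩ := Nat.exists_eq_add_of_le hn
          rw [show stirling2 (1 + m) 0 = 0 by
            rw [show 1 + m = m + 1 by ring]; rfl]
          simp
        · obtain ⟨m, rfl⟩ := Nat.exists_eq_add_of_le hk0
          rw [show 1 + m = m + 1 by ring, stirling1_succ_zero]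
          simp
      rw [hzero, zero_add, Finset.sum_mul]
      refine Finset.sum_congr rfl fun j _ => ?_
      ring
    rw [← htgt]
    exact hinner
  have := hasSum_sum key
  refine this.congr_fun fun r => ?_
  rw [geomPoly, Finset.sum_div]
end

section
/- For every natural number k and every real t, Σ_{r=0}^∞ (r)_k t^r/r! = e^t Σ_{j=0}^k L(k,j) t^j, where r runs over nonnegative integers. -/
/-!
Both sides are linear combinations of the series `∑ r^{\underline j} t^r / r! = t^j e^t`
(falling factorials `r^{\underline j}` kill the first `j` terms and cancel against `r!`).
It therefore suffices to expand the rising factorial in falling factorials,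
`(r)_k = ∑_j L(k,j) r^{\underline j}`; after dividing by `k!` this is Vandermonde's identity
`C(r+k-1, k) = ∑_i C(r, i+1) C(k-1, i)`, since `L(k, i+1) (i+1)! = k! C(k-1, i)`.
-/

open Finset MeasureTheory Real

/-- The (unsigned) Lah numbers: `L(n,k) = (n!/k!) C(n-1,k-1)` for `n, k ≥ 1`,
`L(0,0) = 1`, `L(n,0) = 0` for `n ≥ 1` (and `L(n,k) = 0` for `k > n`). -/
def lah : ℕ → ℕ → ℕ
  | 0, 0 => 1
  | 0, _ + 1 => 0
  | _ + 1, 0 => 0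
  | n + 1, k + 1 => (n + 1).factorial / (k + 1).factorial * Nat.choose n k

open Nat

theorem add_choose_succ_eq_sum (n m : ℕ) :
    (n + m).choose (m + 1) = ∑ i ∈ range (m + 1), n.choose (i + 1) * m.choose i := by
  rw [Nat.add_choose_eq, Finset.Nat.sum_antidiagonal_succ,
    Finset.Nat.sum_antidiagonal_eq_sum_range_succ_mk]
  simp only [Nat.choose_succ_self, mul_zero, zero_add]
  exact sum_congr rfl fun i hi => by rw [Nat.choose_symm (Nat.lt_succ_iff.mp (mem_range.mp hi))]

theorem lah_succ_succ_mul_factorial {m i : ℕ} (hi : i ≤ m) :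
    lah (m + 1) (i + 1) * (i + 1)! = (m + 1)! * m.choose i := by
  rw [lah, mul_right_comm, Nat.div_mul_cancel (Nat.factorial_dvd_factorial (by omega))]

theorem ascFactorial_eq_sum_lah_mul_descFactorial (n k : ℕ) :
    n.ascFactorial k = ∑ j ∈ range (k + 1), lah k j * n.descFactorial j := by
  cases k with
  | zero => simp [lah]
  | succ m =>
    have hterm : ∀ i ∈ range (m + 1), lah (m + 1) (i + 1) * n.descFactorial (i + 1)
        = (m + 1)! * (n.choose (i + 1) * m.choose i) := fun i hi => by
      rw [Nat.descFactorial_eq_factorial_mul_choose, ← mul_assoc,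
        lah_succ_succ_mul_factorial (Nat.lt_succ_iff.mp (mem_range.mp hi))]
      ring
    rw [sum_range_succ', show lah (m + 1) 0 = 0 from rfl, zero_mul, add_zero, sum_congr rfl hterm,
      ← mul_sum, ← add_choose_succ_eq_sum, Nat.ascFactorial_eq_factorial_mul_choose',
      Nat.add_succ_sub_one]

theorem hasSum_descFactorial_mul_pow_div_factorial (j : ℕ) (t : ℝ) :
    HasSum (fun r : ℕ => (r.descFactorial j : ℝ) * t ^ r / r !) (Real.exp t * t ^ j) := by
  have hexp : HasSum (fun n : ℕ => t ^ n / n !) (Real.exp t) := by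
    rw [Real.exp_eq_exp_ℝ]
    exact NormedSpace.expSeries_div_hasSum_exp t
  have vanish : ∑ r ∈ range j, (r.descFactorial j : ℝ) * t ^ r / r ! = 0 :=
    sum_eq_zero fun r hr => by simp [Nat.descFactorial_eq_zero_iff_lt.mpr (mem_range.mp hr)]
  have shifted (m : ℕ) :
      ((m + j).descFactorial j : ℝ) * t ^ (m + j) / (m + j)! = t ^ m / m ! * t ^ j := by
    have hfact : (m ! : ℝ) * (m + j).descFactorial j = (m + j)! := by
      exact_mod_cast Nat.add_sub_cancel m j ▸ Nat.factorial_mul_descFactorial (Nat.le_add_left j m)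
    rw [← hfact, pow_add]
    field_simp
  rw [← hasSum_nat_add_iff' j, vanish, sub_zero]
  simp only [shifted]
  exact hexp.mul_right (t ^ j)

/-- For every natural `k` and real `t`,
`Σ_{r=0}^∞ (r)_k t^r/r! = e^t Σ_{j=0}^k L(k,j) t^j`. -/
theorem pochhammer_egf_lah (k : ℕ) (t : ℝ) :
    HasSum (fun r : ℕ => (ascPochhammer ℝ k).eval (r : ℝ) * t ^ r / r.factorial)
      (Real.exp t * ∑ j ∈ Finset.range (k + 1), (lah k j : ℝ) * t ^ j) := by
  have expand (r : ℕ) : (ascPochhammer ℝ k).eval (r : ℝ) * t ^ r / r ! =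
      ∑ j ∈ range (k + 1), (lah k j : ℝ) * ((r.descFactorial j : ℝ) * t ^ r / r !) := by
    rw [← ascPochhammer_eval_cast, ascPochhammer_nat_eq_ascFactorial,
      ascFactorial_eq_sum_lah_mul_descFactorial]
    push_cast
    rw [sum_mul, sum_div]
    exact sum_congr rfl fun j _ => by ring
  simp only [expand, mul_sum, mul_left_comm (Real.exp t)]
  exact hasSum_sum fun j _ => (hasSum_descFactorial_mul_pow_div_factorial j t).mul_left _
end

section
/- For every natural number n, every real r > 0, and every real x, the convolution recurrence ω_{n+1,r}(x) + r·ω_{n,r}(x) = r(x+1) Σ_{k=0}^n C(n,k) ω_{k,r}(x) ω_{n-k}(x) holds. In particular, with ω_{n,r} := ω_{n,r}(1) and ω_n := ω_n(1), one has ω_{n+1,r} = Σ_{k=0}^{n-1} C(n,k) 2r ω_{k,r} ω_{n-k} + r ω_{n,r}. -/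
open Finset MeasureTheory Real

lemma stirling2_eq_zero : ∀ {n k : ℕ}, n < k → stirling2 n k = 0
  | 0, _ + 1, _ => rfl
  | n + 1, k + 1, h => by
    show (k + 1) * stirling2 n (k + 1) + stirling2 n k = 0
    rw [stirling2_eq_zero (by omega), stirling2_eq_zero (by omega)]
    ring

lemma asc_succ_left (k : ℕ) (r : ℝ) :
    (ascPochhammer ℝ (k+1)).eval r = r * (ascPochhammer ℝ k).eval (r+1) := by
  rw [ascPochhammer_succ_left]
  simp [Polynomial.eval_comp]

lemma asc_succ_right (k : ℕ) (r : ℝ) :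
    (ascPochhammer ℝ (k+1)).eval r = (ascPochhammer ℝ k).eval r * (r + k) := by
  rw [ascPochhammer_succ_right]
  simp

lemma geomPoly_zero (r x : ℝ) : geomPoly 0 r x = 1 := by
  simp [geomPoly, stirling2]

lemma lemA (n : ℕ) (r x : ℝ) :
    geomPoly (n+1) r x = r*(x+1)*geomPoly n (r+1) x - r * geomPoly n r x := by
  have hT : ∑ k ∈ range (n+1),
      ((k:ℝ)+1) * (stirling2 n (k+1) : ℝ) * (ascPochhammer ℝ (k+1)).eval r * x ^ (k+1)
      = ∑ k ∈ range (n+1), (k:ℝ) * (stirling2 n k : ℝ) * (ascPochhammer ℝ k).eval r * x ^ k := by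
    rw [Finset.sum_range_succ, Finset.sum_range_succ' (fun k =>
      (k:ℝ) * (stirling2 n k : ℝ) * (ascPochhammer ℝ k).eval r * x ^ k)]
    rw [stirling2_eq_zero (Nat.lt_succ_self n)]
    push_cast
    ring
  unfold geomPoly
  rw [Finset.sum_range_succ' (fun k =>
      (stirling2 (n+1) k : ℝ) * (ascPochhammer ℝ k).eval r * x ^ k)]
  have h0 : (stirling2 (n+1) 0 : ℝ) = 0 := by norm_cast
  rw [h0]
  have hrec : ∀ k, (stirling2 (n+1) (k+1) : ℝ)
      = ((k:ℝ)+1) * (stirling2 n (k+1) : ℝ) + (stirling2 n k : ℝ) := by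
    intro k
    show ((((k + 1) * stirling2 n (k + 1) + stirling2 n k : ℕ)) : ℝ) = _
    push_cast; ring
  calc (∑ k ∈ range (n+1),
        (stirling2 (n+1) (k+1) : ℝ) * (ascPochhammer ℝ (k+1)).eval r * x ^ (k+1))
        + 0 * (ascPochhammer ℝ 0).eval r * x ^ 0
      = ∑ k ∈ range (n+1),
        (((k:ℝ)+1) * (stirling2 n (k+1) : ℝ) * (ascPochhammer ℝ (k+1)).eval r * x ^ (k+1)
         + (stirling2 n k : ℝ) * (ascPochhammer ℝ (k+1)).eval r * x ^ (k+1)) := by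
        rw [Finset.sum_congr rfl (fun k (_ : k ∈ range (n+1)) => by
          rw [hrec k]
          ring : ∀ k ∈ range (n+1),
            (stirling2 (n+1) (k+1) : ℝ) * (ascPochhammer ℝ (k+1)).eval r * x ^ (k+1)
            = ((k:ℝ)+1) * (stirling2 n (k+1) : ℝ) * (ascPochhammer ℝ (k+1)).eval r * x ^ (k+1)
              + (stirling2 n k : ℝ) * (ascPochhammer ℝ (k+1)).eval r * x ^ (k+1))]
        ring
    _ = (∑ k ∈ range (n+1),
          ((k:ℝ)+1) * (stirling2 n (k+1) : ℝ) * (ascPochhammer ℝ (k+1)).eval r * x ^ (k+1))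
        + ∑ k ∈ range (n+1),
          (stirling2 n k : ℝ) * (ascPochhammer ℝ (k+1)).eval r * x ^ (k+1) := by
        rw [Finset.sum_add_distrib]
    _ = r*(x+1)*geomPoly n (r+1) x - r * geomPoly n r x := by
        rw [hT]
        unfold geomPoly
        rw [Finset.mul_sum, Finset.mul_sum, ← Finset.sum_sub_distrib, ← Finset.sum_add_distrib]
        refine Finset.sum_congr rfl (fun k _ => ?_)
        have h1 := asc_succ_left k r
        have h2 := asc_succ_right k r
        rw [h1] at h2 ⊢
        linear_combination (-((stirling2 n k : ℝ) * x ^ k)) * h2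

lemma lemB (n : ℕ) (r s x : ℝ) :
    ∑ k ∈ Finset.range (n+1), (n.choose k : ℝ) * geomPoly k r x * geomPoly (n-k) s x
      = geomPoly n (r+s) x := by
  induction n generalizing r s with
  | zero => simp [geomPoly_zero]
  | succ n ih =>
    have key : ∑ k ∈ range (n+2), ((n+1).choose k : ℝ) * geomPoly k r x * geomPoly (n+1-k) s x
        = (∑ k ∈ range (n+1), (n.choose k : ℝ) * geomPoly (k+1) r x * geomPoly (n-k) s x)
          + ∑ k ∈ range (n+1), (n.choose k : ℝ) * geomPoly k r x * geomPoly (n+1-k) s x := by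
      rw [Finset.sum_range_succ' (fun k =>
        ((n+1).choose k : ℝ) * geomPoly k r x * geomPoly (n+1-k) s x)]
      have e1 : ∀ k ∈ range (n+1),
          ((n+1).choose (k+1) : ℝ) * geomPoly (k+1) r x * geomPoly (n+1-(k+1)) s x
          = (n.choose k : ℝ) * geomPoly (k+1) r x * geomPoly (n-k) s x
            + (n.choose (k+1) : ℝ) * geomPoly (k+1) r x * geomPoly (n-k) s x := by
        intro k _
        have : (n+1).choose (k+1) = n.choose k + n.choose (k+1) := Nat.choose_succ_succ n k
        rw [this]
        have : (n+1) - (k+1) = n - k := by omega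
        rw [this]
        push_cast
        ring
      rw [Finset.sum_congr rfl e1, Finset.sum_add_distrib]
      have e2 : ∑ k ∈ range (n+1), (n.choose (k+1) : ℝ) * geomPoly (k+1) r x * geomPoly (n-k) s x
            + ((n+1).choose 0 : ℝ) * geomPoly 0 r x * geomPoly (n+1-0) s x
          = ∑ k ∈ range (n+1), (n.choose k : ℝ) * geomPoly k r x * geomPoly (n+1-k) s x := by
        rw [Finset.sum_range_succ' (fun k =>
          (n.choose k : ℝ) * geomPoly k r x * geomPoly (n+1-k) s x)]
        rw [Finset.sum_range_succ]
        have : (n.choose (n+1) : ℝ) = 0 := by rw [Nat.choose_eq_zero_of_lt (by omega)]; norm_cast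
        rw [this]
        have e3 : ∀ k, n + 1 - (k+1) = n - k := fun k => by omega
        simp only [e3]
        simp
      rw [add_assoc, e2]
    rw [key]
    have hA : ∑ k ∈ range (n+1), (n.choose k : ℝ) * geomPoly (k+1) r x * geomPoly (n-k) s x
        = r*(x+1) * geomPoly n ((r+1)+s) x - r * geomPoly n (r+s) x := by
      rw [← ih (r+1) s, ← ih r s, Finset.mul_sum, Finset.mul_sum, ← Finset.sum_sub_distrib]
      refine Finset.sum_congr rfl (fun k _ => ?_)
      rw [lemA k r x]
      ring
    have hD : ∑ k ∈ range (n+1), (n.choose k : ℝ) * geomPoly k r x * geomPoly (n+1-k) s x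
        = s*(x+1) * geomPoly n (r+(s+1)) x - s * geomPoly n (r+s) x := by
      rw [← ih r (s+1), ← ih r s, Finset.mul_sum, Finset.mul_sum, ← Finset.sum_sub_distrib]
      refine Finset.sum_congr rfl (fun k hk => ?_)
      have : n + 1 - k = (n - k) + 1 := by
        have := Finset.mem_range.mp hk; omega
      rw [this, lemA (n-k) s x]
      ring
    rw [hA, hD, lemA n (r+s) x]
    have : (r+1)+s = (r+s)+1 := by ring
    rw [this]
    have : r+(s+1) = (r+s)+1 := by ring
    rw [this]
    ring

/-- For natural `n` and real `r > 0`,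
`ω_{n+1,r}(x) + r ω_{n,r}(x) = r(x+1) Σ_{k=0}^n C(n,k) ω_{k,r}(x) ω_{n-k}(x)` for all real `x`;
in particular, at `x = 1`,
`ω_{n+1,r} = Σ_{k=0}^{n-1} C(n,k) 2r ω_{k,r} ω_{n-k} + r ω_{n,r}`. -/
theorem geomPoly_convolution (n : ℕ) (r : ℝ) (hr : 0 < r) :
    (∀ x : ℝ, geomPoly (n + 1) r x + r * geomPoly n r x =
      r * (x + 1) * ∑ k ∈ Finset.range (n + 1),
        (Nat.choose n k : ℝ) * geomPoly k r x * geomPoly (n - k) 1 x) ∧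
    geomPoly (n + 1) r 1 =
      (∑ k ∈ Finset.range n,
        (Nat.choose n k : ℝ) * (2 * r) * geomPoly k r 1 * geomPoly (n - k) 1 1) +
        r * geomPoly n r 1 := by
  constructor
  · intro x
    rw [lemB n r 1 x, lemA n r x]
    ring
  · have hfull := lemB n r 1 1
    rw [Finset.sum_range_succ] at hfull
    rw [Nat.choose_self] at hfull
    simp only [Nat.sub_self, geomPoly_zero, Nat.cast_one] at hfull
    have hsum : ∑ k ∈ Finset.range n,
        (Nat.choose n k : ℝ) * (2 * r) * geomPoly k r 1 * geomPoly (n - k) 1 1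
        = (2*r) * ∑ k ∈ Finset.range n,
          (Nat.choose n k : ℝ) * geomPoly k r 1 * geomPoly (n - k) 1 1 := by
      rw [Finset.mul_sum]
      exact Finset.sum_congr rfl (fun k _ => by ring)
    rw [hsum, lemA n r 1]
    linear_combination (-(2*r)) * hfull
end

section
/- For every real r > 0, every natural number n, and every real x, the differential relation ω_{n,r+1}(x) = (x/r)·ω_{n,r}'(x) + ω_{n,r}(x) holds, where ω_{n,r}' denotes the derivative of the polynomial ω_{n,r} with respect to x. In particular, for r = 1, ω_{n,2}(x) = x·ω_n'(x) + ω_n(x). -/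
open Finset MeasureTheory Real

/-! The identity holds term by term: `x · (x^k)' = k x^k`, and
`r · (r+1)_k = (r)_{k+1} = (r)_k · (r + k)`. -/

theorem ascPochhammer_eval_add_one_mul {S : Type*} [CommSemiring S] (k : ℕ) (r : S) :
    r * (ascPochhammer S k).eval (r + 1) = (ascPochhammer S k).eval r * (r + k) := by
  rw [← ascPochhammer_succ_eval, ascPochhammer_succ_left]
  simp [Polynomial.eval_comp]

theorem hasDerivAt_geomPoly (n : ℕ) (r x : ℝ) :
    HasDerivAt (geomPoly n r)
      (∑ k ∈ range (n + 1), (stirling2 n k : ℝ) * (ascPochhammer ℝ k).eval r * (k * x ^ (k - 1)))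
      x :=
  HasDerivAt.fun_sum fun k _ => (hasDerivAt_pow k x).const_mul _

theorem mul_deriv_geomPoly (n : ℕ) (r x : ℝ) :
    x * deriv (geomPoly n r) x =
      ∑ k ∈ range (n + 1), (stirling2 n k : ℝ) * (ascPochhammer ℝ k).eval r * k * x ^ k := by
  rw [(hasDerivAt_geomPoly n r x).deriv, mul_sum]
  refine sum_congr rfl fun k _ => ?_
  rcases k with _ | k
  · simp
  · push_cast
    ring

theorem geomPoly_add_one {r : ℝ} (hr : r ≠ 0) (n : ℕ) (x : ℝ) :
    geomPoly n (r + 1) x = x / r * deriv (geomPoly n r) x + geomPoly n r x := by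
  rw [div_mul_eq_mul_div, mul_deriv_geomPoly, sum_div, geomPoly, geomPoly, ← sum_add_distrib]
  refine sum_congr rfl fun k _ => ?_
  field_simp
  linear_combination (stirling2 n k : ℝ) * x ^ k * ascPochhammer_eval_add_one_mul k r

/-- For real `r > 0` and natural `n`,
`ω_{n,r+1}(x) = (x/r) ω_{n,r}'(x) + ω_{n,r}(x)` for all real `x`;
in particular, for `r = 1`, `ω_{n,2}(x) = x ω_n'(x) + ω_n(x)`. -/
theorem geomPoly_deriv_rec (r : ℝ) (hr : 0 < r) (n : ℕ) :
    (∀ x : ℝ, geomPoly n (r + 1) x = x / r * deriv (geomPoly n r) x + geomPoly n r x) ∧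
    (∀ x : ℝ, geomPoly n 2 x = x * deriv (geomPoly n 1) x + geomPoly n 1 x) := by
  refine ⟨geomPoly_add_one hr.ne' n, fun x => ?_⟩
  have h := geomPoly_add_one one_ne_zero n x
  norm_num at h
  exact h
end

section
/- For every integer n ≥ 1, ω_n(−1/2) = (4(−1)^n n!/π^{n+1}) · (1 − 1/2^{n+1}) · sin(πn/2) · ζ(n+1). In particular, ω_{2k}(−1/2) = 0 for every integer k ≥ 1. -/
/-!
Setting `S = Nat.stirlingSecond`, the identity `(k + 1) S(n, k + 1) = ∑_{j < n} C(n, j) S(j, k)`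
gives `ω_{n+1}(x) = x ∑_{j ≤ n} C(n + 1, j) ω_j(x)`. At `x = -1/2` this is the recurrence of the
coefficients of `2 / (e^t + 1) = 2 / (e^t - 1) - 4 / (e^{2t} - 1)`, so
`ω_n(-1/2) = E_n(0) = 2 (1 - 2^{n+1}) B_{n+1} / (n + 1)`. The odd Bernoulli numbers vanish, and
Euler's evaluation of `ζ(2k)` through `B_{2k}` gives the rest.
-/

open Finset MeasureTheory Real

open Nat PowerSeries

theorem stirling2_eq_stirlingSecond : stirling2 = Nat.stirlingSecond := by
  funext n k
  induction n generalizing k with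
  | zero => cases k <;> rfl
  | succ n ih =>
    cases k with
    | zero => rfl
    | succ k => simp only [stirling2, Nat.stirlingSecond_succ_succ, ih]

theorem Nat.succ_mul_stirlingSecond_succ (n k : ℕ) :
    (k + 1) * stirlingSecond n (k + 1) = ∑ j ∈ range n, n.choose j * stirlingSecond j k := by
  induction n generalizing k with
  | zero => simp
  | succ n ih =>
    cases k with
    | zero =>
      rw [sum_range_succ']
      simp [stirlingSecond_one_right]
    | succ k =>
      have hsplit : ∑ i ∈ range n, n.choose i * stirlingSecond (i + 1) (k + 1) =
          (k + 1) * ∑ i ∈ range n, n.choose i * stirlingSecond i (k + 1) +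
            ∑ i ∈ range n, n.choose i * stirlingSecond i k := by
        rw [mul_sum, ← sum_add_distrib]
        exact sum_congr rfl fun i _ => by rw [stirlingSecond_succ_succ]; ring
      have hshift : ∑ i ∈ range n, n.choose (i + 1) * stirlingSecond (i + 1) (k + 1) =
          ∑ i ∈ range n, n.choose i * stirlingSecond i (k + 1) + stirlingSecond n (k + 1) := by
        have h := sum_range_succ' (fun j => n.choose j * stirlingSecond j (k + 1)) n
        rw [sum_range_succ, choose_self, one_mul, stirlingSecond_zero_succ, mul_zero,
          add_zero] at h
        exact h.symm
      rw [sum_range_succ', stirlingSecond_zero_succ, mul_zero, add_zero]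
      simp only [choose_succ_succ, add_mul, sum_add_distrib]
      rw [hsplit, hshift, ← ih, ← ih, stirlingSecond_succ_succ]
      ring

theorem geomPoly_one_eq_sum {n m : ℕ} (hnm : n < m) (x : ℝ) :
    geomPoly n 1 x = ∑ k ∈ range m, (stirlingSecond n k * k ! : ℝ) * x ^ k := by
  rw [geomPoly, stirling2_eq_stirlingSecond]
  simp only [ascPochhammer_eval_one]
  refine sum_subset (range_subset_range.2 hnm) fun k _ hk => ?_
  rw [stirlingSecond_eq_zero_of_lt (by simpa using hk)]
  simp

theorem geomPoly_one_succ (n : ℕ) (x : ℝ) :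
    geomPoly (n + 1) 1 x = x * ∑ j ∈ range (n + 1), ((n + 1).choose j : ℝ) * geomPoly j 1 x := by
  have hterm (k : ℕ) : (stirlingSecond (n + 1) (k + 1) * (k + 1)! : ℝ) * x ^ (k + 1) =
      x * ∑ j ∈ range (n + 1), ((n + 1).choose j : ℝ) * (stirlingSecond j k * k ! * x ^ k) := by
    have h := congrArg (Nat.cast : ℕ → ℝ) (succ_mul_stirlingSecond_succ (n + 1) k)
    push_cast at h
    have hfactor :
        ∑ j ∈ range (n + 1), ((n + 1).choose j : ℝ) * (stirlingSecond j k * k ! * x ^ k) =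
          (∑ j ∈ range (n + 1), ((n + 1).choose j : ℝ) * stirlingSecond j k) * (k ! * x ^ k) := by
      rw [sum_mul]
      exact sum_congr rfl fun _ _ => by ring
    rw [hfactor, ← h, factorial_succ]
    push_cast
    ring
  rw [geomPoly_one_eq_sum (lt_add_one _), sum_range_succ', stirlingSecond_succ_zero]
  simp only [hterm, ← mul_sum, CharP.cast_eq_zero, zero_mul, add_zero]
  rw [sum_comm]
  congr 1
  refine sum_congr rfl fun j hj => ?_
  rw [← mul_sum, geomPoly_one_eq_sum (mem_range.1 hj)]

/-- `E_n(0)`, the constant term of the `n`-th Euler polynomial; its exponential generating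
function is `2 / (e^t + 1)`. -/
noncomputable def eulerZero (n : ℕ) : ℚ := 2 * (1 - 2 ^ (n + 1)) * bernoulli (n + 1) / (n + 1)

theorem coeff_mk_div_factorial_mul_exp (a : ℕ → ℚ) (n : ℕ) :
    coeff n (PowerSeries.mk (fun k => a k / k !) * exp ℚ) =
      (∑ j ∈ range (n + 1), n.choose j * a j) / n ! := by
  rw [coeff_mul, Finset.Nat.sum_antidiagonal_eq_sum_range_succ_mk, sum_div]
  refine sum_congr rfl fun j hj => ?_
  rw [coeff_mk, coeff_exp, Nat.cast_choose ℚ (mem_range_succ_iff.1 hj)]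
  simp only [Algebra.algebraMap_self, RingHom.id_apply]
  field_simp

theorem X_mul_mk_eulerZero :
    X * PowerSeries.mk (fun n => eulerZero n / n !) =
      C (2 : ℚ) * (bernoulliPowerSeries ℚ - rescale 2 (bernoulliPowerSeries ℚ)) := by
  ext (_ | n)
  · rw [coeff_zero_X_mul, coeff_C_mul, map_sub, coeff_rescale, pow_zero, one_mul, sub_self,
      mul_zero]
  · rw [coeff_succ_X_mul, coeff_mk, coeff_C_mul, map_sub, coeff_rescale, bernoulliPowerSeries,
      coeff_mk, eulerZero, factorial_succ]
    simp only [Algebra.algebraMap_self, RingHom.id_apply]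
    push_cast
    field_simp

theorem mk_eulerZero_mul_exp_add_one :
    PowerSeries.mk (fun n => eulerZero n / n !) * (exp ℚ + 1) = 2 := by
  set E := PowerSeries.mk (fun n => eulerZero n / n !)
  set B := bernoulliPowerSeries ℚ
  have hB : B * (exp ℚ - 1) = X := bernoulliPowerSeries_mul_exp_sub_one ℚ
  have hB2 : rescale 2 B * (exp ℚ ^ 2 - 1) = 2 * X := by
    have h := congrArg (rescale (2 : ℚ)) hB
    rwa [map_mul, map_sub, map_one, rescale_X, ← Nat.cast_ofNat, ← exp_pow_eq_rescale_exp,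
      map_natCast] at h
  have hE : X * E = 2 * (B - rescale 2 B) := by
    rw [X_mul_mk_eulerZero, map_ofNat]
  have hne : (X * (exp ℚ - 1) : PowerSeries ℚ) ≠ 0 := by
    refine mul_ne_zero X_ne_zero fun h => ?_
    simpa [coeff_exp] using congrArg (coeff 1) h
  refine mul_left_cancel₀ hne ?_
  linear_combination (exp ℚ ^ 2 - 1) * hE + 2 * (exp ℚ + 1) * hB - 2 * hB2

theorem sum_choose_mul_eulerZero (n : ℕ) :
    ∑ j ∈ range (n + 1), ((n + 1).choose j : ℚ) * eulerZero j = -2 * eulerZero (n + 1) := by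
  have h := congrArg (coeff (n + 1)) mk_eulerZero_mul_exp_add_one
  rw [mul_add, mul_one, map_add, coeff_mk_div_factorial_mul_exp, coeff_mk, sum_range_succ,
    choose_self, ← map_ofNat C, coeff_C, if_neg (succ_ne_zero n)] at h
  have hfac : ((n + 1)! : ℚ) ≠ 0 := by positivity
  field_simp at h
  linear_combination h

theorem geomPoly_one_neg_half (n : ℕ) : geomPoly n 1 (-1 / 2) = eulerZero n := by
  induction n using Nat.strong_induction_on with
  | _ n ih =>
    rcases n with _ | n
    · norm_num [geomPoly, stirling2, eulerZero]
    rw [geomPoly_one_succ, sum_congr rfl fun j hj => by rw [ih j (mem_range.1 hj)]]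
    have h := congrArg (Rat.cast : ℚ → ℝ) (sum_choose_mul_eulerZero n)
    push_cast at h
    rw [h]
    ring

theorem eulerZero_two_mul {k : ℕ} (hk : k ≠ 0) : eulerZero (2 * k) = 0 := by
  rw [eulerZero, bernoulli_eq_zero_of_odd (odd_two_mul_add_one k) (by omega)]
  simp

theorem realZeta_two_mul {k : ℕ} (hk : k ≠ 0) :
    realZeta (2 * k) =
      (-1) ^ (k + 1) * 2 ^ (2 * k - 1) * π ^ (2 * k) * bernoulli (2 * k) / (2 * k)! := by
  have h := (hasSum_nat_add_iff' 1).2 (hasSum_zeta_nat hk)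
  rw [sum_range_one, Nat.cast_zero, zero_pow (by omega), div_zero, sub_zero] at h
  rw [realZeta, ← h.tsum_eq]
  congr with m
  norm_cast

theorem sin_pi_mul_two_mul_add_one_div_two (m : ℕ) :
    sin (π * ((2 * m + 1 : ℕ) : ℝ) / 2) = (-1) ^ m := by
  rw [show π * ((2 * m + 1 : ℕ) : ℝ) / 2 = m * π + π / 2 by push_cast; ring, sin_add_pi_div_two,
    cos_nat_mul_pi]

theorem sin_pi_mul_two_mul_div_two (m : ℕ) : sin (π * ((2 * m : ℕ) : ℝ) / 2) = 0 := by
  rw [show π * ((2 * m : ℕ) : ℝ) / 2 = m * π by push_cast; ring, sin_nat_mul_pi]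

/-- For every integer `n ≥ 1`,
`ω_n(−1/2) = (4(−1)^n n!/π^{n+1}) (1 − 1/2^{n+1}) sin(πn/2) ζ(n+1)`;
in particular, `ω_{2k}(−1/2) = 0` for every integer `k ≥ 1`. -/
theorem geomPoly_at_neg_half :
    (∀ n : ℕ, 1 ≤ n →
      geomPoly n 1 (-1 / 2) =
        4 * (-1 : ℝ) ^ n * (n.factorial : ℝ) / Real.pi ^ (n + 1) *
          (1 - 1 / 2 ^ (n + 1)) * Real.sin (Real.pi * n / 2) * realZeta ((n : ℝ) + 1)) ∧
    (∀ k : ℕ, 1 ≤ k → geomPoly (2 * k) 1 (-1 / 2) = 0) := by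
  refine ⟨fun n hn => ?_, fun k hk => ?_⟩
  · obtain ⟨m, rfl | rfl⟩ := n.even_or_odd'
    · rw [sin_pi_mul_two_mul_div_two, geomPoly_one_neg_half, eulerZero_two_mul (by omega)]
      simp
    · have hzeta : ((2 * m + 1 : ℕ) : ℝ) + 1 = 2 * ((m + 1 : ℕ) : ℝ) := by push_cast; ring
      rw [geomPoly_one_neg_half, sin_pi_mul_two_mul_add_one_div_two, hzeta,
        realZeta_two_mul (succ_ne_zero m), eulerZero, show 2 * (m + 1) - 1 = 2 * m + 1 by omega,
        show 2 * (m + 1) = 2 * m + 1 + 1 by ring, factorial_succ (2 * m + 1),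
        (odd_two_mul_add_one m).neg_one_pow, show (-1 : ℝ) ^ (m + 1 + 1) = (-1) ^ m by ring]
      have hsign : ((-1 : ℝ) ^ m) ^ 2 = 1 := by
        rw [← pow_mul, Even.neg_one_pow ⟨m, by ring⟩]
      push_cast
      field_simp
      linear_combination (4 * 2 ^ (2 * m + 1) * (2 ^ (2 * m + 1 + 1) - 1) *
        (bernoulli (2 * m + 1 + 1) : ℝ)) * hsign
  · rw [geomPoly_one_neg_half, eulerZero_two_mul (by omega), Rat.cast_zero]
end

section
/- For every natural number r and every real x with |x| < 1, Σ_{n=1}^∞ C(n+r,n) ζ(n+1) x^n = Σ_{m=1}^r C(r,m) ζ(m+1, 1−x) x^m − ψ(1−x) − γ (an empty sum being 0), where the series on the left converges absolutely. -/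
open Finset Real

/-- The Hurwitz zeta function `ζ(s,a) = Σ_{k=0}^∞ (k+a)^{-s}` (for real `a > 0`, `s > 1`). -/
noncomputable def hurwitzZetaReal (s a : ℝ) : ℝ := ∑' k : ℕ, 1 / ((k : ℝ) + a) ^ s

/-- The digamma function `ψ = Γ'/Γ`. -/
noncomputable def digammaReal (y : ℝ) : ℝ := deriv Real.Gamma y / Real.Gamma y

/-!
Expanding `ζ(n+2) = Σ_k (k+1)^(-(n+2))` turns the left side into a double series. For fixed `k`
the sum over `n` is a negative binomial series, equal to `c^r/(c-x)^(r+1) - 1/c` with `c = k+1`.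
Writing `c = x + (c - x)` and expanding `c^r` binomially turns this into
`Σ_{m=1}^r C(r,m) x^m (c-x)^(-(m+1)) + (1/(c-x) - 1/c)`, and summing over `k` gives the Hurwitz
zeta values and, through `ψ(y) + γ = Σ_k (1/(k+1) - 1/(k+y))`, the digamma term. That series for
`ψ` comes from `ψ(y+1) = ψ(y) + 1/y`, `ψ(N+1) = -γ + H_N`, and the monotonicity of `ψ` (convexity of
`log Γ`), which forces `ψ(N+1) - ψ(y+N) → 0`. For `|x|` in place of `x` all terms are nonnegative,
so the same computation gives absolute convergence and justifies exchanging the two sums.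
-/

open Filter Topology

local notation "γ" => Real.eulerMascheroniConstant

theorem hasSum_hurwitzZetaReal {s a : ℝ} (hs : 1 < s) (ha : 0 < a) :
    HasSum (fun k : ℕ => 1 / ((k : ℝ) + a) ^ s) (hurwitzZetaReal s a) := by
  refine (((Real.summable_one_div_nat_add_rpow a s).2 hs).congr fun k => ?_).hasSum
  rw [abs_of_pos (by positivity)]

theorem hasSum_hurwitzZetaReal_natCast {p : ℕ} {a : ℝ} (hp : 1 < p) (ha : 0 < a) :
    HasSum (fun k : ℕ => 1 / ((k : ℝ) + a) ^ p) (hurwitzZetaReal p a) := by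
  simpa only [rpow_natCast] using hasSum_hurwitzZetaReal (s := p) (by exact_mod_cast hp) ha

theorem realZeta_eq_hurwitzZetaReal_one (s : ℝ) : realZeta s = hurwitzZetaReal s 1 := rfl

theorem realZeta_nonneg (s : ℝ) : 0 ≤ realZeta s :=
  tsum_nonneg fun m => by positivity

theorem digammaReal_eq_deriv_log_Gamma {y : ℝ} (hy : 0 < y) :
    digammaReal y = deriv (log ∘ Gamma) y := by
  rw [Function.comp_def, deriv.log (differentiableAt_Gamma fun m => by linarith)
    (Gamma_pos_of_pos hy).ne', digammaReal]

theorem differentiableAt_log_Gamma {y : ℝ} (hy : 0 < y) : DifferentiableAt ℝ (log ∘ Gamma) y :=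
  (differentiableAt_Gamma fun m => by linarith).log (Gamma_pos_of_pos hy).ne'

theorem monotoneOn_digammaReal : MonotoneOn digammaReal (Set.Ioi 0) := by
  intro a ha b hb hab
  rw [digammaReal_eq_deriv_log_Gamma ha, digammaReal_eq_deriv_log_Gamma hb]
  exact convexOn_log_Gamma.monotoneOn_deriv (fun y hy => differentiableAt_log_Gamma hy) ha hb hab

theorem digammaReal_add_one {y : ℝ} (hy : 0 < y) : digammaReal (y + 1) = digammaReal y + 1 / y := by
  have h_rec : ∀ t : ℝ, 0 < t → (log ∘ Gamma) (t + 1) = (log ∘ Gamma) t + log t := fun t ht => by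
    simp only [Function.comp_apply, Gamma_add_one ht.ne',
      log_mul ht.ne' (Gamma_pos_of_pos ht).ne', add_comm]
  rw [digammaReal_eq_deriv_log_Gamma (by positivity), digammaReal_eq_deriv_log_Gamma hy,
    ← deriv_comp_add_const, one_div, ← deriv_log,
    ← deriv_add (differentiableAt_log_Gamma hy) (differentiableAt_log hy.ne')]
  exact EventuallyEq.deriv_eq (eventually_gt_nhds hy |>.mono h_rec)

theorem digammaReal_add_natCast {y : ℝ} (hy : 0 < y) (N : ℕ) :
    digammaReal (y + N) = digammaReal y + ∑ k ∈ range N, 1 / (y + k) := by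
  induction N with
  | zero => simp
  | succ N ih =>
    rw [Nat.cast_succ, ← add_assoc, digammaReal_add_one (by positivity), ih, sum_range_succ,
      add_assoc]

theorem digammaReal_natCast_add_one (N : ℕ) : digammaReal (N + 1) = -γ + harmonic N := by
  rw [digammaReal, deriv_Gamma_nat, Gamma_nat_eq_factorial,
    mul_div_cancel_left₀ _ (by positivity)]

theorem tendsto_digammaReal_natCast_add_one_sub {y : ℝ} (hy : 0 < y) :
    Tendsto (fun N : ℕ => digammaReal (N + 1) - digammaReal (y + N)) atTop (𝓝 0) := by
  obtain ⟨M, hM1, hyM⟩ : ∃ M : ℕ, (1 : ℝ) ≤ M ∧ y ≤ M :=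
    ⟨⌈y⌉₊ + 1, by simp, by push_cast; linarith [Nat.le_ceil y]⟩
  -- both arguments lie in `[N, N + M]`, where `digammaReal` increases by `∑_{i<M} 1/(N+i)`
  have hbound : ∀ N : ℕ, 0 < N →
      ‖digammaReal (N + 1) - digammaReal (y + N)‖ ≤ ∑ i ∈ range M, 1 / ((N : ℝ) + i) := by
    intro N hN
    have hN : (0 : ℝ) < N := by exact_mod_cast hN
    have hmono : ∀ {a b : ℝ}, 0 < a → a ≤ b → digammaReal a ≤ digammaReal b := fun ha hab =>
      monotoneOn_digammaReal ha (lt_of_lt_of_le ha hab) hab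
    rw [norm_eq_abs, ← add_sub_cancel_left (digammaReal N) (∑ i ∈ range M, _),
      ← digammaReal_add_natCast hN]
    exact abs_sub_le_of_le_of_le (hmono hN (by linarith)) (hmono (by linarith) (by linarith))
      (hmono hN (by linarith)) (hmono (by linarith) (by linarith))
  have hlim : Tendsto (fun N : ℕ => ∑ i ∈ range M, 1 / ((N : ℝ) + i)) atTop (𝓝 0) := by
    simpa using tendsto_finsetSum (range M) fun i _ => (tendsto_const_nhds (x := (1 : ℝ))).div_atTop
      (tendsto_atTop_add_const_right _ (i : ℝ) tendsto_natCast_atTop_atTop)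
  exact squeeze_zero_norm' ((eventually_gt_atTop 0).mono hbound) hlim

theorem summable_one_div_add_one_sub_one_div_add {y : ℝ} (hy : 0 < y) :
    Summable fun k : ℕ => 1 / ((k : ℝ) + 1) - 1 / ((k : ℝ) + y) := by
  set a := min 1 y
  have ha : 0 < a := lt_min one_pos hy
  refine Summable.of_norm_bounded
    ((hasSum_hurwitzZetaReal_natCast (p := 2) one_lt_two ha).summable.mul_left |y - 1|) fun k => ?_
  have hk1 : (k : ℝ) + a ≤ k + 1 := by linarith [min_le_left 1 y]
  have hky : (k : ℝ) + a ≤ k + y := by linarith [min_le_right 1 y]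
  have hka : 0 < (k : ℝ) + a := by positivity
  have heq : 1 / ((k : ℝ) + 1) - 1 / ((k : ℝ) + y) = (y - 1) / ((k + 1) * (k + y)) := by
    field_simp
    ring
  rw [norm_eq_abs, heq, abs_div, abs_of_pos (show (0 : ℝ) < (k + 1) * (k + y) by positivity),
    mul_one_div, sq]
  gcongr

theorem hasSum_digammaReal {y : ℝ} (hy : 0 < y) :
    HasSum (fun k : ℕ => 1 / ((k : ℝ) + 1) - 1 / ((k : ℝ) + y)) (digammaReal y + γ) := by
  have hpartial : ∀ N : ℕ, ∑ k ∈ range N, (1 / ((k : ℝ) + 1) - 1 / ((k : ℝ) + y)) =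
      digammaReal y + γ + (digammaReal (N + 1) - digammaReal (y + N)) := by
    intro N
    rw [digammaReal_natCast_add_one, digammaReal_add_natCast hy, harmonic, sum_sub_distrib]
    push_cast
    simp only [one_div, add_comm y]
    ring
  rw [(summable_one_div_add_one_sub_one_div_add hy).hasSum_iff_tendsto_nat, funext hpartial]
  simpa using (tendsto_digammaReal_natCast_add_one_sub hy).const_add (digammaReal y + γ)

theorem add_pow_div_pow_succ {K : Type*} [Field K] (x : K) {y : K} (hy : y ≠ 0) (r : ℕ) :
    (x + y) ^ r / y ^ (r + 1) = ∑ m ∈ range (r + 1), (r.choose m : K) * x ^ m / y ^ (m + 1) := by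
  rw [add_pow, sum_div]
  refine sum_congr rfl fun m hm => ?_
  have hmr : r + 1 = m + 1 + (r - m) := by have := mem_range.1 hm; omega
  rw [hmr, pow_add]
  field_simp

theorem hasSum_choose_mul_pow_div_pow (r : ℕ) {c x : ℝ} (hx : |x| < c) :
    HasSum (fun n : ℕ => ((n + 1 + r).choose (n + 1) : ℝ) * x ^ (n + 1) / c ^ (n + 2))
      (c ^ r / (c - x) ^ (r + 1) - 1 / c) := by
  have hc : 0 < c := (abs_nonneg x).trans_lt hx
  have hxc : ‖x / c‖ < 1 := by rwa [norm_div, norm_of_nonneg hc.le, div_lt_one hc]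
  have hcx : c - x ≠ 0 := by linarith [le_abs_self x]
  have h := (hasSum_choose_mul_geometric_of_norm_lt_one r hxc).div_const c
  have hval : 1 / (1 - x / c) ^ (r + 1) / c = c ^ r / (c - x) ^ (r + 1) := by
    rw [one_sub_div hc.ne', div_pow, one_div_div, pow_succ]
    field_simp
  rw [hval, ← hasSum_nat_add_iff' 1] at h
  simp only [range_one, sum_singleton, zero_add, Nat.choose_self, Nat.cast_one, pow_zero,
    one_mul] at h
  have hterm : (fun n : ℕ => ((n + 1 + r).choose r : ℝ) * (x / c) ^ (n + 1) / c) =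
      fun n : ℕ => ((n + 1 + r).choose (n + 1) : ℝ) * x ^ (n + 1) / c ^ (n + 2) := by
    funext n
    rw [Nat.choose_symm_add, div_pow, mul_div_assoc, mul_div_assoc, div_div, ← pow_succ]
  rwa [hterm] at h

/-- The `(n, k)` term of `Σ_n C(n+1+r, n+1) ζ(n+2) x^(n+1)` after expanding `ζ(n+2)`. -/
noncomputable def binomialZetaTerm (r : ℕ) (x : ℝ) (p : ℕ × ℕ) : ℝ :=
  ((p.1 + 1 + r).choose (p.1 + 1) : ℝ) * x ^ (p.1 + 1) / ((p.2 : ℝ) + 1) ^ (p.1 + 2)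

theorem abs_binomialZetaTerm (r : ℕ) (x : ℝ) (p : ℕ × ℕ) :
    |binomialZetaTerm r x p| = binomialZetaTerm r |x| p := by
  simp only [binomialZetaTerm, abs_div, abs_mul, abs_pow, Nat.abs_cast,
    abs_of_pos (show (0 : ℝ) < (p.2 : ℝ) + 1 by positivity)]

theorem hasSum_binomialZetaTerm_row (r : ℕ) (x : ℝ) (n : ℕ) :
    HasSum (fun k => binomialZetaTerm r x (n, k))
      ((n + 1 + r).choose (n + 1) * realZeta ((n : ℝ) + 1 + 1) * x ^ (n + 1)) := by
  have h := (hasSum_hurwitzZetaReal_natCast (p := n + 2) (by omega) one_pos).mul_left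
    (((n + 1 + r).choose (n + 1) : ℝ) * x ^ (n + 1))
  rw [realZeta_eq_hurwitzZetaReal_one, show (n : ℝ) + 1 + 1 = ((n + 2 : ℕ) : ℝ) by push_cast; ring,
    mul_right_comm]
  have hterm : (fun k : ℕ => ((n + 1 + r).choose (n + 1) : ℝ) * x ^ (n + 1) *
      (1 / ((k : ℝ) + 1) ^ (n + 2))) = fun k => binomialZetaTerm r x (n, k) :=
    funext fun k => mul_one_div _ _
  rwa [hterm] at h

theorem hasSum_binomialZetaTerm_column (r : ℕ) {x : ℝ} (hx : |x| < 1) (k : ℕ) :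
    HasSum (fun n => binomialZetaTerm r x (n, k))
      (((k : ℝ) + 1) ^ r / ((k : ℝ) + 1 - x) ^ (r + 1) - 1 / ((k : ℝ) + 1)) := by
  have hk : |x| < (k : ℝ) + 1 := hx.trans_le (le_add_of_nonneg_left k.cast_nonneg)
  simpa only [binomialZetaTerm] using hasSum_choose_mul_pow_div_pow r hk

theorem hasSum_binomialZetaTerm_column_sums (r : ℕ) {x : ℝ} (hx : |x| < 1) :
    HasSum (fun k : ℕ => ((k : ℝ) + 1) ^ r / ((k : ℝ) + 1 - x) ^ (r + 1) - 1 / ((k : ℝ) + 1))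
      ((∑ m ∈ Icc 1 r, (r.choose m : ℝ) * hurwitzZetaReal ((m : ℝ) + 1) (1 - x) * x ^ m) -
        digammaReal (1 - x) - γ) := by
  have ha : 0 < 1 - x := by linarith [le_abs_self x]
  have hpt : ∀ k : ℕ, ((k : ℝ) + 1) ^ r / ((k : ℝ) + 1 - x) ^ (r + 1) - 1 / ((k : ℝ) + 1) =
      (∑ m ∈ Icc 1 r, (r.choose m : ℝ) * x ^ m * (1 / ((k : ℝ) + (1 - x)) ^ (m + 1))) -
        (1 / ((k : ℝ) + 1) - 1 / ((k : ℝ) + (1 - x))) := by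
    intro k
    have hka : (k : ℝ) + (1 - x) ≠ 0 := by positivity
    rw [show (k : ℝ) + 1 - x = k + (1 - x) by ring, show (k : ℝ) + 1 = x + (k + (1 - x)) by ring,
      add_pow_div_pow_succ x hka, sum_range_succ', ← Ico_add_one_right_eq_Icc,
      sum_Ico_eq_sum_range, add_tsub_cancel_right]
    simp only [add_comm 1, div_eq_mul_inv, Nat.choose_zero_right, Nat.cast_one,
      pow_zero, zero_add, pow_one, one_mul]
    ring
  have h := (hasSum_sum (s := Icc 1 r) fun m hm => (hasSum_hurwitzZetaReal_natCast (p := m + 1)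
    (by have := (mem_Icc.1 hm).1; omega) ha).mul_left ((r.choose m : ℝ) * x ^ m)).sub
    (hasSum_digammaReal ha)
  have hval : (∑ m ∈ Icc 1 r, (r.choose m : ℝ) * hurwitzZetaReal ((m : ℝ) + 1) (1 - x) * x ^ m) -
      digammaReal (1 - x) - γ = (∑ m ∈ Icc 1 r, (r.choose m : ℝ) * x ^ m *
        hurwitzZetaReal ((m + 1 : ℕ) : ℝ) (1 - x)) - (digammaReal (1 - x) + γ) := by
    push_cast
    rw [sub_sub]
    exact congrArg (· - _) (sum_congr rfl fun m _ => mul_right_comm _ _ _)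
  rw [funext hpt, hval]
  exact h

theorem summable_binomialZetaTerm (r : ℕ) {x : ℝ} (hx : |x| < 1) :
    Summable (binomialZetaTerm r x) := by
  have hx' : |(|x|)| < 1 := by rwa [abs_abs]
  -- for `|x|` the terms are nonnegative, so summability follows from the iterated sum over columns
  have habs : Summable (binomialZetaTerm r |x| ∘ Equiv.prodComm ℕ ℕ) := by
    rw [summable_prod_of_nonneg fun p => by
      rw [Pi.zero_apply, Function.comp_apply, ← abs_binomialZetaTerm]; exact abs_nonneg _]
    exact ⟨fun k => (hasSum_binomialZetaTerm_column r hx' k).summable,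
      (hasSum_binomialZetaTerm_column_sums r hx').summable.congr fun k =>
        (hasSum_binomialZetaTerm_column r hx' k).tsum_eq.symm⟩
  refine Summable.of_abs ?_
  simpa only [abs_binomialZetaTerm] using (Equiv.prodComm ℕ ℕ).summable_iff.1 habs

theorem hasSum_binomialZetaTerm (r : ℕ) {x : ℝ} (hx : |x| < 1) :
    HasSum (binomialZetaTerm r x)
      ((∑ m ∈ Icc 1 r, (r.choose m : ℝ) * hurwitzZetaReal ((m : ℝ) + 1) (1 - x) * x ^ m) -
        digammaReal (1 - x) - γ) := by
  have hS := (summable_binomialZetaTerm r hx).hasSum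
  have hcols := ((Equiv.prodComm ℕ ℕ).hasSum_iff.2 hS).prod_fiberwise
    (hasSum_binomialZetaTerm_column r hx)
  rwa [(hasSum_binomialZetaTerm_column_sums r hx).unique hcols]

/-- For every natural `r` and real `|x| < 1`,
`Σ_{n=1}^∞ C(n+r,n) ζ(n+1) x^n = Σ_{m=1}^r C(r,m) ζ(m+1, 1−x) x^m − ψ(1−x) − γ`
(an empty sum being `0`), with the series on the left converging absolutely. -/
theorem series_zeta_values_digamma (r : ℕ) (x : ℝ) (hx : |x| < 1) :
    (Summable fun n : ℕ =>
      |(Nat.choose (n + 1 + r) (n + 1) : ℝ) * realZeta ((n : ℝ) + 1 + 1) * x ^ (n + 1)|) ∧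
    HasSum (fun n : ℕ =>
      (Nat.choose (n + 1 + r) (n + 1) : ℝ) * realZeta ((n : ℝ) + 1 + 1) * x ^ (n + 1))
      ((∑ m ∈ Finset.Icc 1 r,
        (Nat.choose r m : ℝ) * hurwitzZetaReal ((m : ℝ) + 1) (1 - x) * x ^ m) -
        digammaReal (1 - x) - Real.eulerMascheroniConstant) := by
  refine ⟨?_, (hasSum_binomialZetaTerm r hx).prod_fiberwise (hasSum_binomialZetaTerm_row r x)⟩
  have hx' : |(|x|)| < 1 := by rwa [abs_abs]
  refine ((hasSum_binomialZetaTerm r hx').prod_fiberwise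
    (hasSum_binomialZetaTerm_row r |x|)).summable.congr fun n => ?_
  rw [abs_mul, abs_mul, abs_pow, Nat.abs_cast, abs_of_nonneg (realZeta_nonneg _)]
end
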